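/- (Uniqueness of pivots under reduction) If R = D·V and R' = D·V' are two reduced matrices obtained from the same m×m matrix D over Z/2Z by invertible upper triangular V and V', then R and R' have the same set of pivot pairs: for every j, column j of R is zero iff column j of R' is zero, and if nonzero they have the same pivot. -/

import Mathlib

/-!
Column `j` of `M` *clears on a row set `S`* if some combination of the columns `≤ j`,
with nonzero coefficient at `j`, vanishes on `S`. Right multiplication by an invertible upper
triangular matrix only re-expresses such combinations, so clearing is the same for `D`,
`D * V` and `D * V'`. In a reduced matrix, and for `S` an upper set of rows, a column
clears on `S` exactly when it vanishes on `S`: the summand with the highest pivot in a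
vanishing combination could not be cancelled. Taking `S = univ`, `S = Ici i` and `S = Ioi i`
recovers zero columns and pivots.
-/

open Matrix

/-- `i` is the pivot of column `j` of `M`. -/
def IsPivot {m : ℕ} (M : Matrix (Fin m) (Fin m) (ZMod 2)) (i j : Fin m) : Prop :=
  M i j ≠ 0 ∧ ∀ i' : Fin m, i < i' → M i' j = 0

/-- `M` is reduced: all nonzero columns have pairwise distinct pivots. -/
def Reduced {m : ℕ} (M : Matrix (Fin m) (Fin m) (ZMod 2)) : Prop :=
  ∀ i j j' : Fin m, IsPivot M i j → IsPivot M i j' → j = j'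

section Clearing

variable {m n K : Type*} [Fintype n] [LinearOrder n] [Field K]

def ClearsOn (M : Matrix m n K) (S : Set m) (j : n) : Prop :=
  ∃ c : n → K, c j ≠ 0 ∧ (∀ k, j < k → c k = 0) ∧ ∀ i ∈ S, (M *ᵥ c) i = 0

lemma Matrix.IsUpperTriangular.diag_ne_zero {V : Matrix n n K} (hVt : V.IsUpperTriangular)
    (hVu : IsUnit V) (j : n) : V j j ≠ 0 := by
  have hdet : V.det ≠ 0 := ((isUnit_iff_isUnit_det V).mp hVu).ne_zero
  rw [det_of_isUpperTriangular hVt] at hdet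
  exact Finset.prod_ne_zero_iff.mp hdet j (Finset.mem_univ j)

lemma ClearsOn.of_mul {D : Matrix m n K} {V : Matrix n n K} (hVt : V.IsUpperTriangular)
    (hVu : IsUnit V) {S : Set m} {j : n} (h : ClearsOn (D * V) S j) : ClearsOn D S j := by
  obtain ⟨c, hcj, hc_supp, hc_zero⟩ := h
  have hcoeff : ∀ k, j ≤ k → (V *ᵥ c) k = if k = j then V j j * c j else 0 := by
    intro k hjk
    change ∑ l, V k l * c l = _
    refine (Finset.sum_eq_single_of_mem j (Finset.mem_univ j) fun l _ hlj => ?_).trans ?_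
    · rcases lt_or_gt_of_ne hlj with hlj | hjl
      · rw [hVt (hlj.trans_le hjk), zero_mul]
      · rw [hc_supp l hjl, mul_zero]
    · split_ifs with hkj
      · rw [hkj]
      · rw [hVt (lt_of_le_of_ne hjk (Ne.symm hkj)), zero_mul]
  refine ⟨V *ᵥ c, ?_, fun k hjk => ?_, fun i hi => ?_⟩
  · rw [hcoeff j le_rfl, if_pos rfl]
    exact mul_ne_zero (hVt.diag_ne_zero hVu j) hcj
  · rw [hcoeff k hjk.le, if_neg hjk.ne']
  · rw [mulVec_mulVec]
    exact hc_zero i hi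

lemma clearsOn_mul_iff {D : Matrix m n K} {V : Matrix n n K} (hVt : V.IsUpperTriangular)
    (hVu : IsUnit V) {S : Set m} {j : n} : ClearsOn (D * V) S j ↔ ClearsOn D S j := by
  refine ⟨ClearsOn.of_mul hVt hVu, fun h => ?_⟩
  have : Invertible V := hVu.invertible
  have hVinv_t : V⁻¹.IsUpperTriangular := blockTriangular_inv_of_blockTriangular hVt
  have hVinv_u : IsUnit V⁻¹ := isUnit_nonsing_inv_iff.mpr hVu
  rw [← mul_inv_cancel_right_of_invertible (A := V) D] at h
  exact h.of_mul hVinv_t hVinv_u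

lemma clearsOn_of_col_eq_zero {M : Matrix m n K} {S : Set m} {j : n}
    (h : ∀ i ∈ S, M i j = 0) : ClearsOn M S j := by
  classical
  refine ⟨Pi.single j 1, by simp, fun k hjk => Pi.single_eq_of_ne hjk.ne' 1, fun i hi => ?_⟩
  simpa [mulVec_single] using h i hi

end Clearing

section Reduced

variable {m : ℕ} {R : Matrix (Fin m) (Fin m) (ZMod 2)}

lemma exists_isPivot_of_ne_zero {i j : Fin m} (h : R i j ≠ 0) : ∃ p, i ≤ p ∧ IsPivot R p j := by
  classical
  obtain ⟨p, hp, hp_max⟩ :=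
    (Finset.univ.filter fun i' => R i' j ≠ 0).exists_max_image id ⟨i, by simpa using h⟩
  simp only [Finset.mem_filter, Finset.mem_univ, true_and, id] at hp hp_max
  exact ⟨p, hp_max i h, hp, fun i' hpi' => by_contra fun h' => (hp_max i' h').not_gt hpi'⟩

lemma Reduced.col_eq_zero_of_mulVec_eq_zero (hR : Reduced R) {S : Set (Fin m)}
    (hS : IsUpperSet S) {c : Fin m → ZMod 2} {j : Fin m} (hcj : c j ≠ 0)
    (hc : ∀ i ∈ S, (R *ᵥ c) i = 0) : ∀ i ∈ S, R i j = 0 := by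
  classical
  by_contra! ⟨i, hiS, hij⟩
  let P := Finset.univ.filter fun p => p ∈ S ∧ ∃ k, c k ≠ 0 ∧ IsPivot R p k
  have mem_P {p k} (hpS : p ∈ S) (hck : c k ≠ 0) (hpk : IsPivot R p k) : p ∈ P := by
    simpa [P] using ⟨hpS, k, hck, hpk⟩
  obtain ⟨p₀, hp₀i, hp₀⟩ := exists_isPivot_of_ne_zero hij
  obtain ⟨p, hpP, hp_max⟩ := P.exists_max_image id ⟨p₀, mem_P (hS hp₀i hiS) hcj hp₀⟩
  obtain ⟨hpS, k₀, hck₀, hpk₀⟩ : p ∈ S ∧ ∃ k, c k ≠ 0 ∧ IsPivot R p k := by simpa [P] using hpP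
  -- every other column in the combination has its pivot strictly below `p`, hence vanishes at `p`
  have hsingle : (R *ᵥ c) p = R p k₀ * c k₀ := by
    refine Finset.sum_eq_single_of_mem k₀ (Finset.mem_univ k₀) fun k _ hk => ?_
    by_contra hne
    obtain ⟨hRpk, hck⟩ := mul_ne_zero_iff.mp hne
    obtain ⟨q, hpq, hqk⟩ := exists_isPivot_of_ne_zero hRpk
    have hqp : q = p := le_antisymm (hp_max q (mem_P (hS hpq hpS) hck hqk)) hpq
    exact hk (hR p k k₀ (hqp ▸ hqk) hpk₀)
  exact mul_ne_zero hpk₀.1 hck₀ (hsingle ▸ hc p hpS)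

lemma Reduced.clearsOn_iff (hR : Reduced R) {S : Set (Fin m)} (hS : IsUpperSet S) {j : Fin m} :
    ClearsOn R S j ↔ ∀ i ∈ S, R i j = 0 := by
  refine ⟨fun ⟨c, hcj, _, hc⟩ => hR.col_eq_zero_of_mulVec_eq_zero hS hcj hc,
    clearsOn_of_col_eq_zero⟩

end Reduced

lemma isPivot_iff_forall_mem_Ici_Ioi {m : ℕ} (M : Matrix (Fin m) (Fin m) (ZMod 2)) (i j : Fin m) :
    IsPivot M i j ↔ ¬(∀ i' ∈ Set.Ici i, M i' j = 0) ∧ ∀ i' ∈ Set.Ioi i, M i' j = 0 := by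
  refine ⟨fun ⟨hne, hz⟩ => ⟨fun h => hne (h i (Set.mem_Ici.mpr le_rfl)), hz⟩,
    fun ⟨hne, hz⟩ => ⟨fun h0 => hne fun i' hi' => ?_, hz⟩⟩
  rcases (Set.mem_Ici.mp hi').eq_or_lt with rfl | hlt
  exacts [h0, hz i' hlt]

/-- Uniqueness of pivots under reduction: two reduced matrices obtained from
the same matrix `D` by right multiplication with invertible upper triangular
matrices have the same zero columns and the same pivots. -/
theorem pivots_unique {m : ℕ}
    (D V V' : Matrix (Fin m) (Fin m) (ZMod 2))
    (hVu : IsUnit V) (hVt : V.BlockTriangular id)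
    (hV'u : IsUnit V') (hV't : V'.BlockTriangular id)
    (hred : Reduced (D * V)) (hred' : Reduced (D * V')) :
    ∀ j : Fin m, ((D * V)ᵀ j = 0 ↔ (D * V')ᵀ j = 0) ∧
      (∀ i : Fin m, IsPivot (D * V) i j ↔ IsPivot (D * V') i j) := by
  intro j
  have key {S : Set (Fin m)} (hS : IsUpperSet S) :
      (∀ i ∈ S, (D * V) i j = 0) ↔ ∀ i ∈ S, (D * V') i j = 0 := by
    rw [← hred.clearsOn_iff hS, ← hred'.clearsOn_iff hS, clearsOn_mul_iff hVt hVu,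
      clearsOn_mul_iff hV't hV'u]
  have hcol (M : Matrix (Fin m) (Fin m) (ZMod 2)) : Mᵀ j = 0 ↔ ∀ i ∈ Set.univ, M i j = 0 := by
    simp [funext_iff]
  refine ⟨by rw [hcol, hcol, key isUpperSet_univ], fun i => ?_⟩
  rw [isPivot_iff_forall_mem_Ici_Ioi, isPivot_iff_forall_mem_Ici_Ioi, key (isUpperSet_Ici i),
    key (isUpperSet_Ioi i)]
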